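/- arXiv:1109.1192 — 6 statements merged into one kernel-verified Lean document; each statement's English description precedes it below -/
import Mathlib

section
/- Let H be a complex Hilbert space, O a Lie ring (e.g. a real Lie algebra), and u : O → B(H) a map satisfying u(0) = 1 and u(a + b) = u(a) · u(b) whenever ⁅a, b⁆ = 0. For C ⊆ O set φ(C) = (u(C) ∪ (u(C))*)'' (the double centralizer in B(H)). Suppose A ⊆ O is pairwise Lie-commuting (⁅a, b⁆ = 0 for all a, b ∈ A) and is a fixpoint of the quantization closure, i.e. A = u⁻¹(φ(A)). Then 0 ∈ A, A is closed under addition (a, b ∈ A implies a + b ∈ A), and A is closed under the Lie bracket (for a, b ∈ A one has ⁅a, b⁆ = 0 ∈ A). -/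
/-- Let `u : O → B(H)` satisfy `u 0 = 1` and
`u (a+b) = u a * u b` whenever `⁅a,b⁆ = 0` (a Weyl-type quantization `a ↦ e^{iâ}`).
If `A ⊆ O` is pairwise Lie-commuting and is a fixpoint of the quantization closure,
`A = u⁻¹(φ(A))` where `φ(A) = (u(A) ∪ u(A)*)''`, then `0 ∈ A`, `A` is closed under
addition, and `A` is closed under the Lie bracket (indeed `⁅a,b⁆ = 0 ∈ A`). -/
theorem proper_prequantization_closed
    {H : Type*} [NormedAddCommGroup H] [InnerProductSpace ℂ H] [CompleteSpace H]
    {O : Type*} [LieRing O] (u : O → (H →L[ℂ] H))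
    (hu0 : u 0 = 1)
    (huadd : ∀ a b : O, ⁅a, b⁆ = 0 → u (a + b) = u a * u b)
    (A : Set O)
    (hcomm : ∀ a ∈ A, ∀ b ∈ A, ⁅a, b⁆ = 0)
    (hfix : A = u ⁻¹' (Set.centralizer (Set.centralizer ((u '' A) ∪ (star '' (u '' A)))))) :
    (0 : O) ∈ A ∧
      (∀ a ∈ A, ∀ b ∈ A, a + b ∈ A) ∧
      (∀ a ∈ A, ∀ b ∈ A, ⁅a, b⁆ ∈ A) := by
  have h0 : (0 : O) ∈ A := by
    rw [hfix]
    simp only [Set.mem_preimage, hu0]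
    exact Set.one_mem_centralizer
  have hadd : ∀ a ∈ A, ∀ b ∈ A, a + b ∈ A := by
    intro a ha b hb
    have ha' : u a ∈ Set.centralizer (Set.centralizer ((u '' A) ∪ (star '' (u '' A)))) := by
      rw [hfix] at ha; exact ha
    have hb' : u b ∈ Set.centralizer (Set.centralizer ((u '' A) ∪ (star '' (u '' A)))) := by
      rw [hfix] at hb; exact hb
    rw [hfix]
    simp only [Set.mem_preimage, huadd a b (hcomm a ha b hb)]
    exact Set.mul_mem_centralizer ha' hb'
  exact ⟨h0, hadd, fun a ha b hb => by rw [hcomm a ha b hb]; exact h0⟩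
end

section
/- Let C and V be partial orders and (φ, ψ) a Galois connection between them (φ : C → V, ψ : V → C monotone with φ(c) ≤ v ⇔ c ≤ ψ(v)); set ♭ = φ∘ψ. Let D ⊆ C be any subset and v ∈ V with ψ(v) ∈ D. Then for every sieve S on v the following are equivalent: (i) for all c ∈ D with φ(c) ≤ v, the morphism φ(c) ⟶ v belongs to S; (ii) the morphism ♭(v) ⟶ v belongs to S. Consequently, every subset D of C containing all values of ψ induces the same Grothendieck topology J on V, given by J(v) = { sieves S on v | (♭(v) ⟶ v) ∈ S }. -/
open CategoryTheory

theorem CategoryTheory.Sieve.arrows_homOfLE_of_le {V : Type*} [Preorder V] {u w v : V}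
    (S : Sieve v) {hw : w ≤ v} (hS : S.arrows (homOfLE hw)) (h : u ≤ w) :
    S.arrows (homOfLE (h.trans hw)) :=
  S.downward_closed hS (homOfLE h)

/-- Let `(φ, ψ)` be a Galois connection between partial orders `C`
and `V`, and `♭ = φ ∘ ψ`. If `D ⊆ C` contains `ψ v`, then for every sieve `S` on `v`,
the sieve contains all morphisms `φ c ⟶ v` with `c ∈ D` and `φ c ≤ v` if and only
if it contains the morphism `♭(v) ⟶ v`. Hence every subset `D` of `C` containing
all values of `ψ` induces the same (quantization) Grothendieck topology
`J(v) = { S | (♭(v) ⟶ v) ∈ S }` on `V`. -/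
theorem quantization_topology_eq_of_mem
    {C V : Type*} [PartialOrder C] [PartialOrder V]
    {φ : C → V} {ψ : V → C} (gc : GaloisConnection φ ψ)
    (D : Set C) (v : V) (hD : ψ v ∈ D) (S : Sieve v) :
    (∀ c ∈ D, ∀ h : φ c ≤ v, S.arrows (homOfLE h)) ↔
      S.arrows (homOfLE (gc.l_u_le v)) := by
  refine ⟨fun H ↦ H (ψ v) hD (gc.l_u_le v), fun H c _ h ↦ ?_⟩
  -- `φ c ≤ v` gives `c ≤ ψ v`, so `φ c ⟶ v` factors through `♭ v ⟶ v`.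
  exact S.arrows_homOfLE_of_le H (gc.monotone_l (gc.le_u h))
end

section
/- Let V be a partial order viewed as a category, and let ♭ : V → V be a monotone map with ♭(v) ≤ v for all v and ♭(♭(v)) = ♭(v). Define, for each v ∈ V, J(v) to be the set of sieves S on v such that the morphism ♭(v) ⟶ v belongs to S. Then J is a Grothendieck topology on V. -/
open CategoryTheory

namespace CategoryTheory

variable {V : Type*} [Preorder V]

theorem Sieve.arrows_homOfLE_of_eq {v x y : V} (S : Sieve v) (hxy : x = y) (hx : x ≤ v)
    (hy : y ≤ v) (hS : S.arrows (homOfLE hx)) : S.arrows (homOfLE hy) := by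
  subst hxy
  exact hS

variable {b : V → V}

/-- The quantization topology of `♭ = b`. -/
def GrothendieckTopology.ofFlat (hb : Monotone b) (hle : ∀ v, b v ≤ v)
    (hidem : ∀ v, b (b v) = b v) : GrothendieckTopology V where
  sieves v := {S | S.arrows (homOfLE (hle v))}
  top_mem' _ := True.intro
  pullback_stable' v w S f hS := by
    have hSw : S.arrows (homOfLE (hb f.le) ≫ homOfLE (hle v)) := S.downward_closed hS _
    rwa [Subsingleton.elim (homOfLE (hb f.le) ≫ homOfLE (hle v)) (homOfLE (hle w) ≫ f)] at hSw
  transitive' v S hS R hR :=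
    -- `R.pullback (b v ⟶ v)` contains `b (b v) ⟶ b v`, i.e. `R` contains `b (b v) ⟶ v`.
    R.arrows_homOfLE_of_eq (hidem v) ((hle _).trans (hle v)) (hle v) (hR hS)

theorem GrothendieckTopology.mem_ofFlat (hb : Monotone b) (hle : ∀ v, b v ≤ v)
    (hidem : ∀ v, b (b v) = b v) {v : V} (S : Sieve v) :
    S ∈ ofFlat hb hle hidem v ↔ S.arrows (homOfLE (hle v)) :=
  Iff.rfl

end CategoryTheory

/-- Let `♭ : V → V` be monotone with `♭ v ≤ v` and `♭ (♭ v) = ♭ v`.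
Then `J(v) = { sieves S on v | (♭(v) ⟶ v) ∈ S }` is a Grothendieck topology on `V`
(the quantization Grothendieck topology). -/
theorem quantization_grothendieckTopology_exists
    {V : Type*} [PartialOrder V]
    {b : V → V} (hb : Monotone b) (hle : ∀ v, b v ≤ v) (hidem : ∀ v, b (b v) = b v) :
    ∃ J : GrothendieckTopology V,
      ∀ (v : V) (S : Sieve v), S ∈ J v ↔ S.arrows (homOfLE (hle v)) :=
  ⟨.ofFlat hb hle hidem, fun _ => GrothendieckTopology.mem_ofFlat hb hle hidem⟩
end

section
/- Let V be a partial order viewed as a category and ♭ : V → V monotone with ♭(v) ≤ v and ♭(♭(v)) = ♭(v). For each v ∈ V and each sieve S on v, define j(S) to be the set of morphisms v' ⟶ v (with v' ≤ v) such that the morphism ♭(v') ⟶ v belongs to S. Then: (a) j(S) is again a sieve on v; (b) j(⊤) = ⊤, where ⊤ is the maximal sieve on v; (c) j(j(S)) = j(S); (d) j(S ⊓ T) = j(S) ⊓ j(T) for all sieves S, T on v; (e) S ≤ j(S); and (f) j is natural with respect to pullback: for every v'' ≤ v, the pullback of j(S) along v'' ⟶ v equals j applied to the pullback of S along v'' ⟶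 v. (These are the Lawvere–Tierney topology axioms for the quantization topology, expressed on sieves.) -/
open CategoryTheory

/-- The Lawvere–Tierney operator `j` on sieves induced by the idempotent deflation
`♭ : V → V`: a morphism `v' ⟶ v` belongs to `j(S)` iff the morphism `♭(v') ⟶ v`
belongs to `S`. -/
def jSieve {V : Type*} [PartialOrder V] {b : V → V} (hb : Monotone b)
    (hle : ∀ v, b v ≤ v) {v : V} (S : Sieve v) : Sieve v where
  arrows v' f := S.arrows (homOfLE ((hle v').trans (leOfHom f)))
  downward_closed := by
    intro v' v'' f hf g
    exact S.downward_closed hf (homOfLE (hb (leOfHom g)))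

/-- The operator `j` defined from a monotone idempotent deflation
`♭` satisfies the Lawvere–Tierney topology axioms on sieves:
(a) `j(S)` is a sieve with the stated arrows (built into `jSieve`, and pinned down
by the first conjunct); (b) `j(⊤) = ⊤`; (c) `j(j(S)) = j(S)`;
(d) `j(S ⊓ T) = j(S) ⊓ j(T)`; (e) `S ≤ j(S)`; (f) `j` commutes with pullback. -/
theorem jSieve_lawvereTierney
    {V : Type*} [PartialOrder V] {b : V → V} (hb : Monotone b)
    (hle : ∀ v, b v ≤ v) (hidem : ∀ v, b (b v) = b v)
    (v : V) (S T : Sieve v) :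
    (∀ (v' : V) (f : v' ⟶ v),
        (jSieve hb hle S).arrows f ↔ S.arrows (homOfLE ((hle v').trans (leOfHom f)))) ∧
      jSieve hb hle (⊤ : Sieve v) = ⊤ ∧
      jSieve hb hle (jSieve hb hle S) = jSieve hb hle S ∧
      jSieve hb hle (S ⊓ T) = jSieve hb hle S ⊓ jSieve hb hle T ∧
      S ≤ jSieve hb hle S ∧
      (∀ (v'' : V) (h : v'' ≤ v),
        Sieve.pullback (homOfLE h) (jSieve hb hle S)
          = jSieve hb hle (Sieve.pullback (homOfLE h) S)) := by

  refine ⟨fun v' f => Iff.rfl, ?_, ?_, ?_, ?_, ?_⟩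
  · ext v' f; simp [jSieve]
  · ext v' f
    show S.arrows _ ↔ S.arrows _
    constructor
    · intro h
      have := S.downward_closed h (homOfLE ((hidem v').ge))
      simpa using this
    · intro h
      have := S.downward_closed h (homOfLE ((hidem v').le))
      simpa using this
  · ext v' f
    show (S ⊓ T).arrows _ ↔ _
    exact Iff.rfl
  · intro v' f hf
    exact S.downward_closed hf (homOfLE (hle v'))
  · intro v'' h
    ext v' f
    exact Iff.rfl
end

section
/- Let C and V be partial orders and (φ, ψ) a Galois connection between them (φ(c) ≤ v ⇔ c ≤ ψ(v)); set ♭ = φ∘ψ. Let D ⊆ C be a subset with ψ(v) ∈ D for every v ∈ V. Let Q : V^op ⥤ Type be a presheaf and S a subpresheaf of Q. Then for every v ∈ V and every q ∈ Q(v): (for all c ∈ D with φ(c) ≤ v, the restriction Q(φ(c) ⟶ v)(q) lies in S(φ(c))) if and only if the restriction Q(♭(v) ⟶ v)(q) lies in S(♭(v)). Hence the closure operator induced by any prequantization category containing the proper one coincides with the ♭-closure S̄(v) = { q ∈ Q(v) | Q(♭(v) ⟶ v)(q) ∈ S(♭(v)) }. -/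
open CategoryTheory Opposite

theorem CategoryTheory.Subfunctor.map_homOfLE_mem_of_le {V : Type*} [Preorder V] {Q : Vᵒᵖ ⥤ Type*}
    (S : Subfunctor Q) {w u v : V} (hwu : w ≤ u) (huv : u ≤ v) {q : Q.obj (op v)}
    (hq : Q.map (homOfLE huv).op q ∈ S.obj (op u)) :
    Q.map (homOfLE (hwu.trans huv)).op q ∈ S.obj (op w) := by
  have hq' := S.map (homOfLE hwu).op hq
  rw [Set.mem_preimage, ← Functor.map_comp_apply] at hq'
  exact hq'

/-- Let `(φ, ψ)` be a Galois connection between partial orders `C`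
and `V` with `♭ = φ ∘ ψ`, and let `D ⊆ C` contain all values of `ψ`. For a presheaf
`Q : Vᵒᵖ ⥤ Type`, a subpresheaf `S` of `Q`, `v ∈ V` and `q ∈ Q(v)`: the restriction
`Q(φ c ⟶ v)(q)` lies in `S(φ c)` for every `c ∈ D` with `φ c ≤ v` if and only if the
restriction `Q(♭(v) ⟶ v)(q)` lies in `S(♭(v))`. Hence the closure operator induced by
any prequantization category containing the proper one coincides with the `♭`-closure. -/
theorem closure_eq_flatClosure_of_galoisConnection
    {C V : Type*} [PartialOrder C] [PartialOrder V]
    {φ : C → V} {ψ : V → C} (gc : GaloisConnection φ ψ)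
    (D : Set C) (hD : ∀ v : V, ψ v ∈ D)
    (Q : Vᵒᵖ ⥤ Type*) (S : Subfunctor Q)
    (v : V) (q : Q.obj (op v)) :
    (∀ c ∈ D, ∀ h : φ c ≤ v, Q.map (homOfLE h).op q ∈ S.obj (op (φ c))) ↔
      Q.map (homOfLE (gc.l_u_le v)).op q ∈ S.obj (op (φ (ψ v))) := by
  refine ⟨fun H => H (ψ v) (hD v) (gc.l_u_le v), fun H c _ h => ?_⟩
  have hc : φ c ≤ φ (ψ v) := gc.monotone_l (gc.le_u h)
  exact S.map_homOfLE_mem_of_le hc (gc.l_u_le v) H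
end

section
/- Let V be a partial order viewed as a category and ♭ : V → V monotone with ♭(v) ≤ v and ♭(♭(v)) = ♭(v). Call a sieve ω on v j-closed if for every v' ≤ v, whenever the morphism ♭(v') ⟶ v belongs to ω, the morphism v' ⟶ v belongs to ω. Then: (a) for every v' ≤ v, the pullback along v' ⟶ v of a j-closed sieve on v is a j-closed sieve on v'; and (b) for every v ∈ V, the pullback map ω ↦ ω.pullback(♭(v) ⟶ v) is a bijection from the set of j-closed sieves on v onto the set of j-closed sieves on ♭(v). (Hence the presheaf Ω_j of j-closed sieves is a sheaf for the quantization topology, and is the subobject classifier of the quantization sheaf topos.) -/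
open CategoryTheory

/-- A sieve `ω` on `v` is `j`-closed (for the Lawvere–Tierney topology induced by the
monotone idempotent deflation `♭`) if, for every `v' ≤ v`, whenever the morphism
`♭(v') ⟶ v` belongs to `ω`, so does `v' ⟶ v`. -/
def JClosed {V : Type*} [PartialOrder V] {b : V → V}
    (hle : ∀ v, b v ≤ v) {v : V} (ω : Sieve v) : Prop :=
  ∀ (v' : V) (h : v' ≤ v),
    ω.arrows (homOfLE ((hle v').trans h)) → ω.arrows (homOfLE h)

/-- In a preorder, sieve membership is independent of the morphism. -/
lemma sieve_arrows_congr {V : Type*} [PartialOrder V] {v u : V} (ω : Sieve v)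
    {f g : u ⟶ v} (hf : ω.arrows f) : ω.arrows g := by
  rwa [Subsingleton.elim g f]

/-- (a) The pullback of a `j`-closed sieve on `v` along `v' ⟶ v`
is a `j`-closed sieve on `v'`; (b) for every `v`, pullback along `♭(v) ⟶ v` is a
bijection from the `j`-closed sieves on `v` onto the `j`-closed sieves on `♭(v)`.
(Hence the presheaf `Ω_j` of `j`-closed sieves is a sheaf for the quantization
topology — the subobject classifier of the quantization sheaf topos.) -/
theorem jClosed_pullback_bijective
    {V : Type*} [PartialOrder V] {b : V → V} (hb : Monotone b)
    (hle : ∀ v, b v ≤ v) (hidem : ∀ v, b (b v) = b v) :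
    (∀ (v v' : V) (h : v' ≤ v) (ω : Sieve v),
        JClosed hle ω → JClosed hle (ω.pullback (homOfLE h))) ∧
      (∀ v : V,
        Set.BijOn (fun ω : Sieve v => ω.pullback (homOfLE (hle v)))
          { ω | JClosed hle ω } { ω | JClosed hle ω }) := by
  have key : ∀ (v : V) (ω : Sieve v), JClosed hle ω → ∀ (u : V) (h : u ≤ v),
      (ω.arrows (homOfLE h) ↔ ω.arrows (homOfLE ((hle u).trans h))) := by
    intro v ω hω u h
    constructor
    · intro hf
      exact sieve_arrows_congr ω (ω.downward_closed hf (homOfLE (hle u)))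
    · exact hω u h
  have pb : ∀ (v v' : V) (h : v' ≤ v) (ω : Sieve v),
      JClosed hle ω → JClosed hle (ω.pullback (homOfLE h)) := by
    intro v v' h ω hω u hu hmem
    simp only [Sieve.pullback_apply] at hmem ⊢
    exact sieve_arrows_congr ω (hω u (hu.trans h) (sieve_arrows_congr ω hmem))
  refine ⟨pb, fun v => ⟨fun ω hω => pb v (b v) (hle v) ω hω, ?_, ?_⟩⟩
  · -- injectivity
    intro ω₁ h₁ ω₂ h₂ heq
    ext u f
    have h : u ≤ v := leOfHom f
    have hbu : b u ≤ b v := hb h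
    have e : (ω₁.pullback (homOfLE (hle v))).arrows (homOfLE hbu) ↔
        (ω₂.pullback (homOfLE (hle v))).arrows (homOfLE hbu) := by
      dsimp only at heq; rw [heq]
    simp only [Sieve.pullback_apply] at e
    constructor
    · intro hf
      refine sieve_arrows_congr ω₂ ((key v ω₂ h₂ u h).2 ?_)
      refine sieve_arrows_congr ω₂ (e.1 ?_)
      exact sieve_arrows_congr ω₁ ((key v ω₁ h₁ u h).1 (sieve_arrows_congr ω₁ hf))
    · intro hf
      refine sieve_arrows_congr ω₁ ((key v ω₁ h₁ u h).2 ?_)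
      refine sieve_arrows_congr ω₁ (e.2 ?_)
      exact sieve_arrows_congr ω₂ ((key v ω₂ h₂ u h).1 (sieve_arrows_congr ω₂ hf))
  · -- surjectivity
    intro σ hσ
    refine ⟨⟨fun u f => σ.arrows (homOfLE (hb (leOfHom f))), ?_⟩, ?_, ?_⟩
    · intro u u' f hf g
      exact sieve_arrows_congr σ
        (σ.downward_closed hf (homOfLE (hb (leOfHom g))))
    · -- the preimage is j-closed
      intro u h hmem
      exact hσ (b u) (hb h) (sieve_arrows_congr σ hmem)
    · -- pullback equals σ
      ext u f
      have h : u ≤ b v := leOfHom f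
      simp only [Sieve.pullback_apply]
      constructor
      · intro hf
        refine hσ u h (sieve_arrows_congr σ hf)
      · intro hf
        exact sieve_arrows_congr σ (σ.downward_closed hf (homOfLE (hle u)))
end
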